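/- Let u : ℝ × ℝ → ℝ solve the Black-Scholes equation u_t + (1/2)σ²x²u_xx + r·x·u_x - r·u = 0 on a domain, let b ∈ ℝ, and let T^t, T^x be the conserved vector defined by T^t(x,t) = -u_x·l(t) + a/x + (2b·u/(σ²x))·e^{-rt}, T^x(x,t) = u_t·l(t) + u·l'(t) + g(t) - b·u·e^{-rt} + b·(u_x + 2ru/(σ²x))·x·e^{-rt}, with l, g differentiable. Then D_t T^t + D_x T^x = 0 at every point of the domain with x ≠ 0. -/

import Mathlib

open Real MeasureTheory

noncomputable def pdx (u : ℝ → ℝ → ℝ) (x t : ℝ) : ℝ := deriv (fun x' => u x' t) x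
noncomputable def pdt (u : ℝ → ℝ → ℝ) (x t : ℝ) : ℝ := deriv (fun t' => u x t') t
noncomputable def pdxx (u : ℝ → ℝ → ℝ) (x t : ℝ) : ℝ := deriv (fun x' => pdx u x' t) x

/-!
The divergence of the conserved vector is `2 b e^{-rt} / (σ² x)` times the Black–Scholes operator
applied to `u`: the terms in `l` cancel by the symmetry of the mixed partials `u_{xt} = u_{tx}`,
`a / x` and `g` do not depend on the variable they are differentiated in, and the singular term
`2 r u / (σ² x)` of the flux is multiplied by `x` before being differentiated in `x`.
-/

section PartialDerivatives

variable {u : ℝ → ℝ → ℝ} {x t : ℝ}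

lemma hasDerivAt_pdx (hu : DifferentiableAt ℝ (Function.uncurry u) (x, t)) :
    HasDerivAt (fun x' => u x' t) (pdx u x t) x :=
  (hu.comp (𝕜 := ℝ) x (differentiableAt_id.prodMk (differentiableAt_const t)) :).hasDerivAt

lemma hasDerivAt_pdt (hu : DifferentiableAt ℝ (Function.uncurry u) (x, t)) :
    HasDerivAt (fun t' => u x t') (pdt u x t) t :=
  (hu.comp (𝕜 := ℝ) t ((differentiableAt_const x).prodMk differentiableAt_id) :).hasDerivAt

lemma pdx_eq_fderiv (hu : DifferentiableAt ℝ (Function.uncurry u) (x, t)) :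
    pdx u x t = fderiv ℝ (Function.uncurry u) (x, t) (1, 0) :=
  (hu.hasFDerivAt.comp_hasDerivAt x ((hasDerivAt_id x).prodMk (hasDerivAt_const x t)) :).deriv

lemma pdt_eq_fderiv (hu : DifferentiableAt ℝ (Function.uncurry u) (x, t)) :
    pdt u x t = fderiv ℝ (Function.uncurry u) (x, t) (0, 1) :=
  (hu.hasFDerivAt.comp_hasDerivAt t ((hasDerivAt_const t x).prodMk (hasDerivAt_id t)) :).deriv

lemma uncurry_pdx_eq (hu : Differentiable ℝ (Function.uncurry u)) :
    Function.uncurry (pdx u) = fun q => fderiv ℝ (Function.uncurry u) q (1, 0) :=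
  funext fun q => pdx_eq_fderiv (hu q)

lemma uncurry_pdt_eq (hu : Differentiable ℝ (Function.uncurry u)) :
    Function.uncurry (pdt u) = fun q => fderiv ℝ (Function.uncurry u) q (0, 1) :=
  funext fun q => pdt_eq_fderiv (hu q)

lemma contDiff_uncurry_pdx {n : ℕ} (hu : ContDiff ℝ (n + 1) (Function.uncurry u)) :
    ContDiff ℝ n (Function.uncurry (pdx u)) := by
  rw [uncurry_pdx_eq (hu.differentiable (by simp))]
  exact (hu.fderiv_right le_rfl).clm_apply contDiff_const

lemma contDiff_uncurry_pdt {n : ℕ} (hu : ContDiff ℝ (n + 1) (Function.uncurry u)) :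
    ContDiff ℝ n (Function.uncurry (pdt u)) := by
  rw [uncurry_pdt_eq (hu.differentiable (by simp))]
  exact (hu.fderiv_right le_rfl).clm_apply contDiff_const

lemma pdt_pdx_eq_pdx_pdt (hu : ContDiff ℝ 2 (Function.uncurry u)) :
    pdt (pdx u) x t = pdx (pdt u) x t := by
  set F := Function.uncurry u
  have hF : Differentiable ℝ F := hu.differentiable (by simp)
  have hF' : HasFDerivAt (fderiv ℝ F) (fderiv ℝ (fderiv ℝ F) (x, t)) (x, t) :=
    ((hu.fderiv_right (m := 1) le_rfl).differentiable one_ne_zero (x, t)).hasFDerivAt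
  have happ (v : ℝ × ℝ) : HasFDerivAt (fun q => fderiv ℝ F q v)
      ((ContinuousLinearMap.apply ℝ ℝ v).comp (fderiv ℝ (fderiv ℝ F) (x, t))) (x, t) :=
    (ContinuousLinearMap.apply ℝ ℝ v).hasFDerivAt.comp (x, t) hF'
  rw [pdt_eq_fderiv ((contDiff_uncurry_pdx (n := 1) hu).differentiable one_ne_zero (x, t)),
    pdx_eq_fderiv ((contDiff_uncurry_pdt (n := 1) hu).differentiable one_ne_zero (x, t)),
    uncurry_pdx_eq hF, uncurry_pdt_eq hF, (happ (1, 0)).fderiv, (happ (0, 1)).fderiv]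
  exact (hu.contDiffAt.isSymmSndFDerivAt (by simp)) (0, 1) (1, 0)

end PartialDerivatives

section BlackScholes

variable (σ r a b : ℝ) (u : ℝ → ℝ → ℝ) (l g : ℝ → ℝ)

noncomputable def blackScholesOperator (x t : ℝ) : ℝ :=
  pdt u x t + (1 / 2) * σ ^ 2 * x ^ 2 * pdxx u x t + r * x * pdx u x t - r * u x t

noncomputable def conservedDensity (x t : ℝ) : ℝ :=
  -pdx u x t * l t + a / x + (2 * b * u x t / (σ ^ 2 * x)) * Real.exp (-r * t)

noncomputable def conservedFlux (x t : ℝ) : ℝ :=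
  pdt u x t * l t + u x t * deriv l t + g t - b * u x t * Real.exp (-r * t)
    + b * (pdx u x t + 2 * r * u x t / (σ ^ 2 * x)) * x * Real.exp (-r * t)

variable {σ r a b u l g} {x t : ℝ}

lemma hasDerivAt_conservedDensity (hu : ContDiff ℝ 2 (Function.uncurry u))
    (hl : DifferentiableAt ℝ l t) :
    HasDerivAt (fun t' => conservedDensity σ r a b u l x t')
      (-pdt (pdx u) x t * l t - pdx u x t * deriv l t
        + 2 * b * (pdt u x t - r * u x t) / (σ ^ 2 * x) * Real.exp (-r * t)) t := by
  have hpdx_t :=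
    hasDerivAt_pdt ((contDiff_uncurry_pdx (n := 1) hu).differentiable one_ne_zero (x, t))
  have hu_t := hasDerivAt_pdt (hu.differentiable two_ne_zero (x, t))
  have hexp : HasDerivAt (fun t' => Real.exp (-r * t')) (-r * Real.exp (-r * t)) t := by
    simpa [mul_comm] using ((hasDerivAt_id t).const_mul (-r)).exp
  refine (((hpdx_t.neg.mul hl.hasDerivAt).add_const (a / x)).add
    (((hu_t.const_mul (2 * b)).div_const (σ ^ 2 * x)).mul hexp)).congr_deriv ?_
  simp only [Pi.neg_apply]
  ring

lemma hasDerivAt_conservedFlux (hu : ContDiff ℝ 2 (Function.uncurry u)) (hx : x ≠ 0) :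
    HasDerivAt (fun x' => conservedFlux σ r b u l g x' t)
      (pdx (pdt u) x t * l t + pdx u x t * deriv l t
        + b * (x * pdxx u x t + 2 * r / σ ^ 2 * pdx u x t) * Real.exp (-r * t)) x := by
  have hpdt_x :=
    hasDerivAt_pdx ((contDiff_uncurry_pdt (n := 1) hu).differentiable one_ne_zero (x, t))
  have hpdx_x : HasDerivAt (fun x' => pdx u x' t) (pdxx u x t) x :=
    hasDerivAt_pdx ((contDiff_uncurry_pdx (n := 1) hu).differentiable one_ne_zero (x, t))
  have hu_x := hasDerivAt_pdx (hu.differentiable two_ne_zero (x, t))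
  have hcancel : (fun x' => conservedFlux σ r b u l g x' t) =ᶠ[nhds x] fun x' =>
      pdt u x' t * l t + u x' t * deriv l t + g t - b * u x' t * Real.exp (-r * t)
        + b * (x' * pdx u x' t + 2 * r / σ ^ 2 * u x' t) * Real.exp (-r * t) := by
    filter_upwards [eventually_ne_nhds hx] with x' hx'
    simp only [conservedFlux]
    field_simp
  refine HasDerivAt.congr_of_eventuallyEq ?_ hcancel
  refine (((((hpdt_x.mul_const (l t)).add (hu_x.mul_const (deriv l t))).add_const (g t)).sub
    ((hu_x.const_mul b).mul_const (Real.exp (-r * t)))).add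
    (((((hasDerivAt_id x).mul hpdx_x).add (hu_x.const_mul (2 * r / σ ^ 2))).const_mul b).mul_const
      (Real.exp (-r * t)))).congr_deriv ?_
  simp only [id]
  ring

lemma pdt_conservedDensity_add_pdx_conservedFlux (hu : ContDiff ℝ 2 (Function.uncurry u))
    (hl : DifferentiableAt ℝ l t) (hσ : σ ≠ 0) (hx : x ≠ 0) :
    pdt (conservedDensity σ r a b u l) x t + pdx (conservedFlux σ r b u l g) x t
      = 2 * b * Real.exp (-r * t) / (σ ^ 2 * x) * blackScholesOperator σ r u x t := by
  rw [pdt, pdx, (hasDerivAt_conservedDensity hu hl).deriv, (hasDerivAt_conservedFlux hu hx).deriv,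
    pdt_pdx_eq_pdx_pdt hu, blackScholesOperator]
  field_simp
  ring

end BlackScholes

theorem stmt1_general (u : ℝ → ℝ → ℝ) (hu : ContDiff ℝ 2 (Function.uncurry u))
    (D : Set (ℝ × ℝ)) (σ r a b : ℝ) (hσ : 0 < σ)
    (hsol : ∀ p ∈ D, pdt u p.1 p.2 + (1 / 2) * σ ^ 2 * p.1 ^ 2 * pdxx u p.1 p.2
              + r * p.1 * pdx u p.1 p.2 - r * u p.1 p.2 = 0)
    (l g : ℝ → ℝ) (hl : Differentiable ℝ l) :
    ∀ p ∈ D, p.1 ≠ 0 →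
      pdt (fun x' t' => -pdx u x' t' * l t' + a / x'
            + (2 * b * u x' t' / (σ ^ 2 * x')) * Real.exp (-r * t')) p.1 p.2
      + pdx (fun x' t' => pdt u x' t' * l t' + u x' t' * deriv l t' + g t'
            - b * u x' t' * Real.exp (-r * t')
            + b * (pdx u x' t' + 2 * r * u x' t' / (σ ^ 2 * x')) * x' * Real.exp (-r * t')) p.1 p.2
      = 0 := by
  rintro ⟨x, t⟩ hp hx
  refine (pdt_conservedDensity_add_pdx_conservedFlux hu (hl t) hσ.ne' hx).trans ?_
  rw [blackScholesOperator, hsol _ hp, mul_zero]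

theorem stmt1 (u : ℝ → ℝ → ℝ) (hu : ContDiff ℝ 2 (Function.uncurry u))
    (D : Set (ℝ × ℝ)) (σ r a b : ℝ) (hσ : 0 < σ)
    (hsol : ∀ p ∈ D, pdt u p.1 p.2 + (1 / 2) * σ ^ 2 * p.1 ^ 2 * pdxx u p.1 p.2
              + r * p.1 * pdx u p.1 p.2 - r * u p.1 p.2 = 0)
    (l g : ℝ → ℝ) (hl : Differentiable ℝ l) (hg : Differentiable ℝ g) :
    ∀ p ∈ D, p.1 ≠ 0 →
      pdt (fun x' t' => -pdx u x' t' * l t' + a / x'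
            + (2 * b * u x' t' / (σ ^ 2 * x')) * Real.exp (-r * t')) p.1 p.2
      + pdx (fun x' t' => pdt u x' t' * l t' + u x' t' * deriv l t' + g t'
            - b * u x' t' * Real.exp (-r * t')
            + b * (pdx u x' t' + 2 * r * u x' t' / (σ ^ 2 * x')) * x' * Real.exp (-r * t')) p.1 p.2
      = 0 :=
  stmt1_general u hu D σ r a b hσ hsol l g hl
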